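/- arXiv:2412.07995 — 14 statements merged into one kernel-verified Lean document; each statement's English description precedes it below -/
import Mathlib

section
/- Let n ≥ 2 and let G ⊆ ℕ^n be a finite nonempty antichain for the pointwise order (the minimal generating set of a monomial ideal I). Then there exists c ∈ G with C_{inf G}(c) ≠ ∅ if and only if inf G ≠ 0 (i.e., gcd(I) ≠ 1). -/
/-- `Cset g c` is the set of exponent vectors `d` with `d ≠ 0`, `d i ≥ c i` whenever
`c i > g i`, and `d i < c i` for some `i` with `c i = g i`. -/
def Cset {ι : Type*} (g c : ι → ℕ) : Set (ι → ℕ) :=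
  {d | d ≠ 0 ∧ (∀ i, g i < c i → c i ≤ d i) ∧ ∃ i, c i = g i ∧ d i < c i}

theorem stmt1 {n : ℕ} (hn : 2 ≤ n) (G : Finset (Fin n → ℕ)) (hG : G.Nonempty)
    (hanti : IsAntichain (· ≤ ·) (G : Set (Fin n → ℕ))) :
    (∃ c ∈ G, (Cset (fun i => G.inf' hG fun a => a i) c).Nonempty) ↔
      (fun i => G.inf' hG fun a => a i) ≠ (0 : Fin n → ℕ) := by
  haveI : Nontrivial (Fin n) := Fin.nontrivial_iff_two_le.mpr hn
  constructor
  · rintro ⟨c, hc, d, hd0, hd1, i, hci, hdi⟩ h0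
    have h : (G.inf' hG fun a => a i) = 0 := congrFun h0 i
    have hci' : c i = G.inf' hG fun a => a i := hci
    rw [h] at hci'
    rw [hci'] at hdi
    exact Nat.not_lt_zero _ hdi
  · intro h0
    obtain ⟨j, hj⟩ : ∃ j, 0 < G.inf' hG fun a => a j := by
      by_contra h
      push_neg at h
      exact h0 (funext fun j => Nat.le_zero.mp (h j))
    obtain ⟨c, hc, hcj⟩ := Finset.exists_mem_eq_inf' hG (fun a => a j)
    refine ⟨c, hc, fun i => if i = j then 0 else c i + 1, ?_, ?_, j, hcj.symm, ?_⟩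
    · obtain ⟨j', hj'⟩ := exists_ne j
      intro h
      have := congrFun h j'
      simp [hj'] at this
    · intro i hi
      have hi' : G.inf' hG (fun a => a i) < c i := hi
      show c i ≤ if i = j then 0 else c i + 1
      by_cases h : i = j
      · subst h
        rw [hcj] at hi'
        exact absurd hi' (lt_irrefl _)
      · simp [h]
    · show (if j = j then 0 else c j + 1) < c j
      simp only [if_pos rfl]
      rw [← hcj]
      exact hj
end

section
/- Let u, c ∈ ℕ^n with u ≤ c pointwise (corresponding to monomials with u dividing c), and let m ∈ ℕ^n. Then m ∈ C_u(c) if and only if there exist w, v ∈ ℕ^n with m + v = c + w (i.e., m = c·w/v as monomials) such that (1) v ≠ 0; (2) if w = 0 then v ≠ c; (3) min(v, c − u) = 0 pointwise (gcd(v, c/u) = 1); and (4) min(v, w) = 0 pointwise (gcd(v, w) = 1). In particular, when these conditions hold one has v ≤ u ≤ c and max(u, c − v) = c pointwise (i.e., lcm(u, c/v) = c). -/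
theorem stmt4 {n : ℕ} (u c : Fin n → ℕ) (huc : u ≤ c) (m : Fin n → ℕ) :
    (m ∈ Cset u c ↔
      ∃ w v : Fin n → ℕ,
        m + v = c + w ∧
        v ≠ 0 ∧
        (w = 0 → v ≠ c) ∧
        (∀ i, min (v i) (c i - u i) = 0) ∧
        (∀ i, min (v i) (w i) = 0)) ∧
    (∀ w v : Fin n → ℕ,
        m + v = c + w →
        v ≠ 0 →
        (w = 0 → v ≠ c) →
        (∀ i, min (v i) (c i - u i) = 0) →
        (∀ i, min (v i) (w i) = 0) →
        v ≤ u ∧ u ≤ c ∧ ∀ i, max (u i) (c i - v i) = c i) := by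
  constructor
  · constructor
    · rintro ⟨hm0, hge, i0, hci, hmi⟩
      refine ⟨fun i => m i - c i, fun i => c i - m i, ?_, ?_, ?_, ?_, ?_⟩
      · funext i; simp only [Pi.add_apply]; omega
      · intro h
        have := congrFun h i0
        simp only [Pi.zero_apply] at this
        omega
      · intro hw hv
        have hw' : ∀ i, m i - c i = 0 := fun i => congrFun hw i
        have hv' : ∀ i, c i - m i = c i := fun i => congrFun hv i
        apply hm0; funext i
        have h1 : u i ≤ c i := huc i; have h2 := hw' i; have h3 := hv' i
        simp only [Pi.zero_apply]; omega
      · intro i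
        show min (c i - m i) (c i - u i) = 0
        by_cases h : u i < c i
        · have := hge i h; omega
        · have h2 : u i ≤ c i := huc i; omega
      · intro i
        show min (c i - m i) (m i - c i) = 0
        omega
    · rintro ⟨w, v, heq, hv0, hwv, hvc, hvw⟩
      have heq' : ∀ i, m i + v i = c i + w i := fun i => congrFun heq i
      obtain ⟨i0, hi0⟩ : ∃ i, v i ≠ 0 := by
        by_contra h; push_neg at h; exact hv0 (funext h)
      refine ⟨?_, ?_, ⟨i0, ?_, ?_⟩⟩
      · intro hm
        have hm' : ∀ i, m i = 0 := fun i => congrFun hm i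
        have hw : w = 0 := by
          funext i
          have h1 := heq' i; have h2 := hvw i; have h3 := hm' i
          simp only [Pi.zero_apply]; omega
        apply hwv hw
        funext i
        have h1 := heq' i; have h2 := congrFun hw i; have h3 := hm' i
        simp only [Pi.zero_apply] at h2 ⊢; omega
      · intro i h
        have h1 := hvc i; have h2' : u i ≤ c i := huc i; have h3 := heq' i
        omega
      · have h1 := hvc i0; have h2 : u i0 ≤ c i0 := huc i0; omega
      · have h1 := hvw i0; have h2 := heq' i0; omega
  · intro w v heq hv0 hwv hvc hvw
    have heq' : ∀ i, m i + v i = c i + w i := fun i => congrFun heq i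
    refine ⟨?_, huc, ?_⟩
    · intro i
      show v i ≤ u i
      have h1 := hvc i; have h2 := hvw i; have h3 := heq' i; have h4 : u i ≤ c i := huc i
      omega
    · intro i
      have h1 := hvc i; have h2 := hvw i; have h3 := heq' i; have h4 : u i ≤ c i := huc i
      omega
end

section
/- Let G ⊆ ℕ^n be a finite nonempty antichain for the pointwise order (the minimal generating set of a monomial ideal I), let c ∈ G with c ≠ 0, and let m ∈ ℕ^n with m ≠ 0 such that no a ∈ G satisfies a ≤ m (i.e., m ∉ I). Then m ∈ C_{inf G}(c) if and only if for every u ∈ ℕ^n with (∃ a ∈ G, a ≤ u) and m ≤ u, one has c ≤ u (i.e., every monomial of I divisible by m is divisible by c). -/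
theorem stmt6 {n : ℕ} (G : Finset (Fin n → ℕ)) (hG : G.Nonempty)
    (hanti : IsAntichain (· ≤ ·) (G : Set (Fin n → ℕ)))
    (c : Fin n → ℕ) (hcG : c ∈ G) (hc0 : c ≠ 0)
    (m : Fin n → ℕ) (hm0 : m ≠ 0) (hmI : ∀ a ∈ G, ¬ a ≤ m) :
    m ∈ Cset (fun i => G.inf' hG fun a => a i) c ↔
      ∀ u : Fin n → ℕ, (∃ a ∈ G, a ≤ u) → m ≤ u → c ≤ u := by
  have hginf : ∀ i, (G.inf' hG fun a => a i) ≤ c i := fun i =>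
    Finset.inf'_le _ hcG
  constructor
  · rintro ⟨-, h2, -⟩ u ⟨a, haG, hau⟩ hmu i
    rcases lt_or_eq_of_le (hginf i) with h | h
    · exact (h2 i h).trans (hmu i)
    · calc c i = G.inf' hG fun a => a i := h.symm
        _ ≤ a i := Finset.inf'_le _ haG
        _ ≤ u i := hau i
  · intro h
    have h2 : ∀ i, (G.inf' hG fun a => a i) < c i → c i ≤ m i := by
      intro i hi
      by_contra hmi
      push_neg at hmi
      obtain ⟨a, haG, hai⟩ := Finset.exists_mem_eq_inf' hG (fun a => a i)
      set u : Fin n → ℕ := fun j => if j = i then max (a i) (m i) else max (a j) (m j)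
        with hu
      have hau : a ≤ u := by
        intro j
        simp only [hu]
        split <;> simp_all [le_max_left]
      have hmu : m ≤ u := by
        intro j
        simp only [hu]
        split <;> simp_all [le_max_right]
      have hcu := h u ⟨a, haG, hau⟩ hmu i
      have hui : u i = max (a i) (m i) := by simp [hu]
      rw [hui, le_max_iff] at hcu
      have h3 : a i < c i := by rw [← hai]; exact hi
      rcases hcu with h' | h'
      · exact absurd h' (Nat.not_le.mpr h3)
      · exact absurd h' (Nat.not_le.mpr hmi)
    refine ⟨hm0, h2, ?_⟩
    by_contra hne
    push_neg at hne
    apply hmI c hcG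
    intro i
    rcases lt_or_eq_of_le (hginf i) with hlt | heq
    · exact h2 i hlt
    · exact hne i heq.symm
end

section
/- Let G ⊆ ℕ^n be a finite nonempty antichain for the pointwise order (the minimal generating set of a monomial ideal I), let c ∈ G with c ≠ 0, and let m ∈ ℕ^n with m ≠ 0 such that no a ∈ G satisfies a ≤ m (i.e., m ∉ I). Then m ∈ C_{inf G}(c) if and only if for every nonempty subset A ⊆ G ∪ {m}, writing u = sup A (the pointwise maximum, an element of the lcm lattice of I + (m)), if m ≤ u and u ≠ m then c ≤ u. -/
theorem stmt7 {n : ℕ} (G : Finset (Fin n → ℕ)) (hG : G.Nonempty)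
    (hanti : IsAntichain (· ≤ ·) (G : Set (Fin n → ℕ)))
    (c : Fin n → ℕ) (hcG : c ∈ G) (hc0 : c ≠ 0)
    (m : Fin n → ℕ) (hm0 : m ≠ 0) (hmI : ∀ a ∈ G, ¬ a ≤ m) :
    m ∈ Cset (fun i => G.inf' hG fun a => a i) c ↔
      ∀ A : Finset (Fin n → ℕ), A ⊆ insert m G → A.Nonempty →
        (m ≤ fun i => A.sup fun a => a i) →
        (fun i => A.sup fun a => a i) ≠ m →
        c ≤ fun i => A.sup fun a => a i := by
  have hgc : ∀ i, (G.inf' hG fun a => a i) ≤ c i := fun i => Finset.inf'_le _ hcG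
  constructor
  · rintro ⟨_, h1, _⟩ A hA hAne hmu hune
    have hex : ∃ a ∈ A, a ∈ G := by
      by_contra h
      push_neg at h
      have hAm : A = {m} := by
        apply Finset.eq_singleton_iff_nonempty_unique_mem.mpr
        refine ⟨hAne, fun x hx => ?_⟩
        rcases Finset.mem_insert.mp (hA hx) with h' | h'
        · exact h'
        · exact absurd h' (h x hx)
      apply hune
      funext i
      simp [hAm]
    obtain ⟨a, haA, haG⟩ := hex
    intro i
    rcases lt_or_eq_of_le (hgc i) with h | h
    · exact le_trans (h1 i h) (hmu i)
    · calc c i = G.inf' hG fun a => a i := h.symm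
        _ ≤ a i := Finset.inf'_le _ haG
        _ ≤ A.sup fun a => a i := Finset.le_sup (f := fun b => b i) haA
  · intro h
    have key : ∀ i, (G.inf' hG fun a => a i) < c i → c i ≤ m i := by
      intro i hi
      obtain ⟨a, haG, ha⟩ := Finset.exists_mem_eq_inf' hG (fun b => b i)
      have hsub : ({m, a} : Finset (Fin n → ℕ)) ⊆ insert m G := by
        intro x hx
        rcases Finset.mem_insert.mp hx with h' | h'
        · simp [h']
        · exact Finset.mem_insert_of_mem (by rw [Finset.mem_singleton.mp h']; exact haG)
      have hmu : m ≤ fun i => ({m, a} : Finset (Fin n → ℕ)).sup fun b => b i := by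
        intro j
        show m j ≤ ({m, a} : Finset (Fin n → ℕ)).sup fun b => b j
        exact Finset.le_sup (f := fun b : Fin n → ℕ => b j) (by simp)
      have hune : (fun i => ({m, a} : Finset (Fin n → ℕ)).sup fun b => b i) ≠ m := by
        intro heq
        apply hmI a haG
        intro j
        have : a j ≤ ({m, a} : Finset (Fin n → ℕ)).sup fun b => b j :=
          Finset.le_sup (f := fun b : Fin n → ℕ => b j) (by simp)
        exact this.trans_eq (congrFun heq j)
      have hcu := h {m, a} hsub ⟨m, by simp⟩ hmu hune i
      simp only [Finset.sup_insert, Finset.sup_singleton, le_sup_iff] at hcu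
      rcases hcu with h' | h'
      · exact h'
      · exact absurd (h'.trans_eq (ha ▸ rfl)) (not_le.mpr hi)
    refine ⟨hm0, key, ?_⟩
    by_contra hno
    push_neg at hno
    apply hmI c hcG
    intro i
    rcases lt_or_eq_of_le (hgc i) with h' | h'
    · exact key i h'
    · exact hno i h'.symm
end

section
/- Let G ⊆ ℕ^n be a finite nonempty antichain for the pointwise order (the minimal generating set of a monomial ideal I), let c ∈ ℕ^n with c ≠ 0 and a ≤ c for some a ∈ G (i.e., c ∈ I), and let m ∈ C_{inf G}(c) with m ≠ 0. Then: (1) no a ∈ G satisfies a ≤ m (i.e., m ∉ I); and (2) for every a ∈ G with a ≠ c, m ≤ a fails (m divides no minimal generator of I other than possibly c). -/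
section Cset

variable {ι : Type*} {g c m a : ι → ℕ}

theorem not_le_of_mem_Cset (hga : g ≤ a) (hm : m ∈ Cset g c) : ¬ a ≤ m := by
  obtain ⟨-, -, i, hci, hmi⟩ := hm
  intro ham
  exact (ham i).not_gt (hmi.trans_le (hci.trans_le (hga i)))

theorem le_of_mem_Cset_of_le (hga : g ≤ a) (hm : m ∈ Cset g c) (hma : m ≤ a) : c ≤ a := by
  intro i
  rcases lt_or_ge (g i) (c i) with hgc | hcg
  · exact (hm.2.1 i hgc).trans (hma i)
  · exact hcg.trans (hga i)

end Cset

theorem stmt8_general {n : ℕ} (G : Finset (Fin n → ℕ)) (hG : G.Nonempty)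
    (hanti : IsAntichain (· ≤ ·) (G : Set (Fin n → ℕ)))
    (c : Fin n → ℕ) (hcI : ∃ a ∈ G, a ≤ c)
    (m : Fin n → ℕ)
    (hm : m ∈ Cset (fun i => G.inf' hG fun a => a i) c) :
    (∀ a ∈ G, ¬ a ≤ m) ∧ (∀ a ∈ G, a ≠ c → ¬ m ≤ a) := by
  have hinf_le : ∀ a ∈ G, (fun i => G.inf' hG fun a => a i) ≤ a :=
    fun a ha i => Finset.inf'_le (fun a => a i) ha
  refine ⟨fun a ha => not_le_of_mem_Cset (hinf_le a ha) hm, fun a ha hac hma => hac ?_⟩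
  obtain ⟨b, hb, hbc⟩ := hcI
  have hca : c ≤ a := le_of_mem_Cset_of_le (hinf_le a ha) hm hma
  have hba : b = a := hanti.eq hb ha (hbc.trans hca)
  exact le_antisymm (hba ▸ hbc) hca

theorem stmt8 {n : ℕ} (G : Finset (Fin n → ℕ)) (hG : G.Nonempty)
    (hanti : IsAntichain (· ≤ ·) (G : Set (Fin n → ℕ)))
    (c : Fin n → ℕ) (hc0 : c ≠ 0) (hcI : ∃ a ∈ G, a ≤ c)
    (m : Fin n → ℕ) (hm0 : m ≠ 0)
    (hm : m ∈ Cset (fun i => G.inf' hG fun a => a i) c) :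
    (∀ a ∈ G, ¬ a ≤ m) ∧ (∀ a ∈ G, a ≠ c → ¬ m ≤ a) :=
  stmt8_general G hG hanti c hcI m hm
end

section
/- Let G ⊆ ℕ^n be a finite nonempty antichain for the pointwise order (the minimal generating set of a monomial ideal I), let c ∈ ℕ^n with c ≠ 0 and a ≤ c for some a ∈ G (i.e., c ∈ I), and let m ∈ C_{inf G}(c) with m ≠ 0. Then the set of pointwise-minimal elements of G ∪ {m} (the minimal generating set of I + (m)) equals (G ∖ {c}) ∪ {m} if m ≤ c, and equals G ∪ {m} otherwise; in either case this set is an antichain and generates the same ideal as G ∪ {m}, i.e., { u ∈ ℕ^n : ∃ a in the set, a ≤ u } = { u ∈ ℕ^n : ∃ a ∈ G ∪ {m}, a ≤ u }. -/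
theorem stmt9 {n : ℕ} (G : Finset (Fin n → ℕ)) (hG : G.Nonempty)
    (hanti : IsAntichain (· ≤ ·) (G : Set (Fin n → ℕ)))
    (c : Fin n → ℕ) (hc0 : c ≠ 0) (hcI : ∃ a ∈ G, a ≤ c)
    (m : Fin n → ℕ) (hm0 : m ≠ 0)
    (hm : m ∈ Cset (fun i => G.inf' hG fun a => a i) c) :
    (m ≤ c →
      {a | a ∈ insert m G ∧ ∀ b ∈ insert m G, b ≤ a → b = a} =
        (↑(G.erase c) ∪ {m} : Set (Fin n → ℕ))) ∧
    (¬ m ≤ c →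
      {a | a ∈ insert m G ∧ ∀ b ∈ insert m G, b ≤ a → b = a} =
        (↑(insert m G) : Set (Fin n → ℕ))) ∧
    IsAntichain (· ≤ ·) {a | a ∈ insert m G ∧ ∀ b ∈ insert m G, b ≤ a → b = a} ∧
    {u : Fin n → ℕ |
        ∃ a ∈ {a | a ∈ insert m G ∧ ∀ b ∈ insert m G, b ≤ a → b = a}, a ≤ u} =
      {u : Fin n → ℕ | ∃ a ∈ insert m G, a ≤ u} := by
  simp only [Cset, Set.mem_setOf_eq] at hm
  obtain ⟨-, hge, i₀, hci₀, hmi₀⟩ := hm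
  obtain ⟨a₀, ha₀G, ha₀c⟩ := hcI
  have hgle : ∀ a ∈ G, ∀ i, G.inf' hG (fun a => a i) ≤ a i :=
    fun a ha i => Finset.inf'_le _ ha
  have hgc : ∀ i, G.inf' hG (fun a => a i) ≤ c i :=
    fun i => le_trans (hgle a₀ ha₀G i) (ha₀c i)
  have factA : ∀ a ∈ G, ¬ a ≤ m := by
    intro a ha hle
    have h1 : a i₀ < c i₀ := lt_of_le_of_lt (hle i₀) hmi₀
    have h2 : c i₀ ≤ a i₀ := hci₀ ▸ hgle a ha i₀
    exact absurd h1 (not_lt.2 h2)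
  have hmG : m ∉ G := fun h => factA m h le_rfl
  have factC : ∀ a ∈ G, m ≤ a → a = c := by
    intro a ha hma
    have hca : c ≤ a := by
      intro i
      rcases lt_or_eq_of_le (hgc i) with h | h
      · exact le_trans (hge i h) (hma i)
      · calc c i ≤ G.inf' hG (fun a => a i) := le_of_eq h.symm
          _ ≤ a i := hgle a ha i
    have h0 : a₀ = a := by
      by_contra hne
      exact hanti ha₀G ha hne (le_trans ha₀c hca)
    exact le_antisymm (h0 ▸ ha₀c) hca
  have hmc : m ≠ c := by
    intro h
    rw [h] at hmi₀
    exact lt_irrefl _ hmi₀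
  have Mmin : ∀ b ∈ insert m G, b ≤ m → b = m := by
    intro b hb hbm
    rcases Finset.mem_insert.1 hb with h | h
    · exact h
    · exact absurd hbm (factA b h)
  have Gmin : ∀ a ∈ G, ¬ m ≤ a → (∀ b ∈ insert m G, b ≤ a → b = a) := by
    intro a ha hna b hb hba
    rcases Finset.mem_insert.1 hb with h | h
    · exact absurd (h ▸ hba) hna
    · by_contra hne
      exact hanti h ha hne hba
  refine ⟨?_, ?_, ?_, ?_⟩
  · intro hmlec
    ext x
    simp only [Set.mem_setOf_eq, Set.mem_union, Set.mem_singleton_iff,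
      Finset.coe_erase, Set.mem_diff, Finset.mem_coe]
    constructor
    · rintro ⟨hx1, hx2⟩
      rcases Finset.mem_insert.1 hx1 with h | h
      · exact Or.inr h
      · refine Or.inl ⟨h, ?_⟩
        intro hxc
        subst hxc
        exact hmc (hx2 m (Finset.mem_insert_self m G) hmlec)
    · rintro (⟨hxG, hxc⟩ | hxm)
      · refine ⟨Finset.mem_insert_of_mem hxG, Gmin x hxG ?_⟩
        intro h; exact hxc (factC x hxG h)
      · exact ⟨hxm ▸ Finset.mem_insert_self m G, hxm ▸ Mmin⟩
  · intro hnmc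
    ext x
    simp only [Set.mem_setOf_eq, Finset.coe_insert, Set.mem_insert_iff,
      Finset.mem_coe]
    constructor
    · rintro ⟨hx, -⟩
      exact Finset.mem_insert.1 hx
    · intro hx
      refine ⟨Finset.mem_insert.2 hx, ?_⟩
      rcases hx with h | h
      · exact h ▸ Mmin
      · exact Gmin x h (fun hmx => hnmc ((factC x h hmx) ▸ hmx))
  · intro a ha b hb hne hab
    exact hne (hb.2 a ha.1 hab)
  · ext u
    simp only [Set.mem_setOf_eq]
    constructor
    · rintro ⟨a, ⟨ha, -⟩, hau⟩
      exact ⟨a, ha, hau⟩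
    · rintro ⟨a, ha, hau⟩
      by_cases hmin : ∀ b ∈ insert m G, b ≤ a → b = a
      · exact ⟨a, ⟨ha, hmin⟩, hau⟩
      · refine ⟨m, ⟨Finset.mem_insert_self m G, Mmin⟩, ?_⟩
        push_neg at hmin
        obtain ⟨b, hb, hba, hne⟩ := hmin
        rcases Finset.mem_insert.1 hb with h | h
        · exact h ▸ le_trans hba hau
        · rcases Finset.mem_insert.1 ha with h' | h'
          · exact absurd (h' ▸ hba) (factA b h)
          · exact absurd hba (hanti h h' hne)
end

section
/- Let G ⊆ ℕ^n be a finite nonempty antichain for the pointwise order (the minimal generating set of a monomial ideal I), let c ∈ G with c ≠ 0, and let m ∈ C_{inf G}(c) with m ≤ c. Then for every nonempty subset A ⊆ G ∖ {c}, sup(A ∪ {c}) = sup(A ∪ {m}), where sup denotes the pointwise maximum (lcm). -/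
theorem stmt10 {n : ℕ} (G : Finset (Fin n → ℕ)) (hG : G.Nonempty)
    (hanti : IsAntichain (· ≤ ·) (G : Set (Fin n → ℕ)))
    (c : Fin n → ℕ) (hcG : c ∈ G) (hc0 : c ≠ 0)
    (m : Fin n → ℕ) (hm : m ∈ Cset (fun i => G.inf' hG fun a => a i) c)
    (hmc : m ≤ c) :
    ∀ A : Finset (Fin n → ℕ), A ⊆ G.erase c → A.Nonempty →
      (fun i => (insert c A).sup fun a => a i) =
        (fun i => (insert m A).sup fun a => a i) := by
  intro A hAG ⟨a, haA⟩
  funext i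
  obtain ⟨-, hge, -⟩ := hm
  have haG : a ∈ G := Finset.mem_of_mem_erase (hAG haA)
  apply le_antisymm
  · apply Finset.sup_le
    intro b hb
    rcases Finset.mem_insert.mp hb with rfl | hb
    · by_cases h : G.inf' hG (fun a => a i) < b i
      · exact le_trans (hge i h) (Finset.le_sup (f := fun a => a i) (Finset.mem_insert_self m A))
      · have h1 : b i ≤ G.inf' hG (fun a => a i) := le_of_not_gt h
        have h2 : G.inf' hG (fun a => a i) ≤ a i := Finset.inf'_le _ haG
        exact le_trans (le_trans h1 h2)
          (Finset.le_sup (f := fun a => a i) (Finset.mem_insert_of_mem haA))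
    · exact Finset.le_sup (f := fun a => a i) (Finset.mem_insert_of_mem hb)
  · apply Finset.sup_le
    intro b hb
    rcases Finset.mem_insert.mp hb with rfl | hb
    · exact le_trans (hmc i) (Finset.le_sup (f := fun a => a i) (Finset.mem_insert_self c A))
    · exact Finset.le_sup (f := fun a => a i) (Finset.mem_insert_of_mem hb)
end

section
/- Let G ⊆ ℕ^n be a finite nonempty antichain for the pointwise order (the minimal generating set of a monomial ideal I), let c ∈ G with c ≠ 0, let m ∈ C_{inf G}(c) with m ≤ c, and set G' = (G ∖ {c}) ∪ {m} (the minimal generating set of I + (m)). Then L_G ∖ {c} = L_{G'} ∖ {m}, where L_H = { sup A : A a nonempty subset of H } is the lcm lattice of H (sup being the pointwise maximum). -/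
/-- The lcm lattice of a finite set of exponent vectors: all pointwise suprema of
nonempty subsets. -/
def lcmLattice {n : ℕ} (H : Finset (Fin n → ℕ)) : Set (Fin n → ℕ) :=
  {u | ∃ A : Finset (Fin n → ℕ), A ⊆ H ∧ A.Nonempty ∧ u = fun i => A.sup fun a => a i}

theorem stmt11 {n : ℕ} (G : Finset (Fin n → ℕ)) (hG : G.Nonempty)
    (hanti : IsAntichain (· ≤ ·) (G : Set (Fin n → ℕ)))
    (c : Fin n → ℕ) (hcG : c ∈ G) (hc0 : c ≠ 0)
    (m : Fin n → ℕ) (hm : m ∈ Cset (fun i => G.inf' hG fun a => a i) c)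
    (hmc : m ≤ c) :
    lcmLattice G \ {c} = lcmLattice (insert m (G.erase c)) \ {m} := by
  classical
  obtain ⟨hm0, hm1, i0, hi0a, hi0b⟩ := hm
  set g : Fin n → ℕ := fun i => G.inf' hG fun a => a i with hgdef
  have hgle : ∀ a ∈ G, ∀ i, g i ≤ a i := fun a ha i => Finset.inf'_le _ ha
  have key : ∀ s : Fin n → ℕ, (∀ i, g i ≤ s i) → ∀ i, m i ⊔ s i = c i ⊔ s i := by
    intro s hs i
    rcases lt_or_ge (g i) (c i) with h | h
    · rw [le_antisymm (hmc i) (hm1 i h)]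
    · have h1 : c i ≤ s i := le_trans h (hs i)
      have h2 : m i ≤ s i := le_trans (hmc i) h1
      rw [sup_eq_right.mpr h2, sup_eq_right.mpr h1]
  have hsupg : ∀ B : Finset (Fin n → ℕ), B ⊆ G → B.Nonempty →
      ∀ i, g i ≤ B.sup fun a => a i := by
    rintro B hB ⟨b, hb⟩ i
    exact le_trans (hgle b (hB hb) i) (Finset.le_sup (f := fun a => a i) hb)
  ext u
  simp only [Set.mem_diff, Set.mem_singleton_iff, lcmLattice, Set.mem_setOf_eq]
  constructor
  · rintro ⟨⟨A, hAG, hAne, rfl⟩, hu⟩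
    by_cases hcA : c ∈ A
    · have hBne : (A.erase c).Nonempty := by
        rcases Finset.eq_empty_or_nonempty (A.erase c) with h | h
        · exfalso; apply hu
          rcases (Finset.erase_eq_empty_iff _ _).mp h with h' | h'
          · exact absurd h' hAne.ne_empty
          · funext i; rw [h', Finset.sup_singleton]
        · exact h
      set B := A.erase c with hBdef
      have hBG : B ⊆ G := (Finset.erase_subset _ _).trans hAG
      have hBG' : B ⊆ G.erase c := fun b hb =>
        Finset.mem_erase.mpr ⟨(Finset.mem_erase.mp hb).1, hAG (Finset.mem_of_mem_erase hb)⟩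
      have hA : A = insert c B := (Finset.insert_erase hcA).symm
      refine ⟨⟨insert m B, Finset.insert_subset_insert _ hBG',
        ⟨m, Finset.mem_insert_self _ _⟩, ?_⟩, ?_⟩
      · funext i
        rw [hA, Finset.sup_insert, Finset.sup_insert]
        exact (key _ (hsupg B hBG hBne) i).symm
      · intro heq
        have h1 : c i0 ≤ A.sup fun a => a i0 := Finset.le_sup (f := fun a => a i0) hcA
        have h2 : (A.sup fun a => a i0) = m i0 := congrFun heq i0
        exact absurd (le_trans h1 h2.le) (not_le.mpr hi0b)
    · refine ⟨⟨A, fun a ha => Finset.mem_insert_of_mem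
        (Finset.mem_erase.mpr ⟨fun h => hcA (h ▸ ha), hAG ha⟩), hAne, rfl⟩, ?_⟩
      intro heq
      obtain ⟨a, ha⟩ := hAne
      have hac : a ≤ c := fun i =>
        le_trans (le_trans (Finset.le_sup (f := fun a => a i) ha) (congrFun heq i).le) (hmc i)
      exact hanti (hAG ha) hcG (fun h => hcA (h ▸ ha)) hac
  · rintro ⟨⟨A, hAG', hAne, rfl⟩, hu⟩
    by_cases hmA : m ∈ A
    · have hBne : (A.erase m).Nonempty := by
        rcases Finset.eq_empty_or_nonempty (A.erase m) with h | h
        · exfalso; apply hu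
          rcases (Finset.erase_eq_empty_iff _ _).mp h with h' | h'
          · exact absurd h' hAne.ne_empty
          · funext i; rw [h', Finset.sup_singleton]
        · exact h
      set B := A.erase m with hBdef
      have hBG' : B ⊆ G.erase c := fun b hb => by
        rcases Finset.mem_insert.mp (hAG' (Finset.mem_of_mem_erase hb)) with h | h
        · exact absurd h (Finset.mem_erase.mp hb).1
        · exact h
      have hBG : B ⊆ G := hBG'.trans (Finset.erase_subset _ _)
      have hA : A = insert m B := (Finset.insert_erase hmA).symm
      refine ⟨⟨insert c B, Finset.insert_subset hcG hBG,
        ⟨c, Finset.mem_insert_self _ _⟩, ?_⟩, ?_⟩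
      · funext i
        rw [hA, Finset.sup_insert, Finset.sup_insert]
        exact key _ (hsupg B hBG hBne) i
      · intro heq
        obtain ⟨b, hb⟩ := hBne
        have hbc : b ≤ c := fun i =>
          le_trans (Finset.le_sup (f := fun a => a i) (hA ▸ Finset.mem_insert_of_mem hb)) (congrFun heq i).le
        exact hanti (hBG hb) hcG (Finset.mem_erase.mp (hBG' hb)).1 hbc
    · have hAG : A ⊆ G := fun a ha => by
        rcases Finset.mem_insert.mp (hAG' ha) with h | h
        · exact absurd (h ▸ ha) hmA
        · exact Finset.mem_of_mem_erase h
      refine ⟨⟨A, hAG, hAne, rfl⟩, ?_⟩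
      intro heq
      obtain ⟨a, ha⟩ := hAne
      have haA' : a ∈ G.erase c := by
        rcases Finset.mem_insert.mp (hAG' ha) with h | h
        · exact absurd (h ▸ ha) hmA
        · exact h
      have hac : a ≤ c := fun i => le_trans (Finset.le_sup (f := fun a => a i) ha) (congrFun heq i).le
      exact hanti (hAG ha) hcG (Finset.mem_erase.mp haA').1 hac
end

section
/- Let G ⊆ ℕ^n be a finite nonempty antichain for the pointwise order (the minimal generating set of a monomial ideal I), let c ∈ G with c ≠ 0, let m ∈ C_{inf G}(c) with m ≤ c, and set G' = (G ∖ {c}) ∪ {m}. Then the map f : L_G → L_{G'} defined by f(c) = m and f(u) = u for u ≠ c is a well-defined order isomorphism of the lcm lattices: f is a bijection and for all u, u' ∈ L_G, u ≤ u' if and only if f(u) ≤ f(u') (pointwise order). -/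
theorem stmt12 {n : ℕ} (G : Finset (Fin n → ℕ)) (hG : G.Nonempty)
    (hanti : IsAntichain (· ≤ ·) (G : Set (Fin n → ℕ)))
    (c : Fin n → ℕ) (hcG : c ∈ G) (hc0 : c ≠ 0)
    (m : Fin n → ℕ) (hm : m ∈ Cset (fun i => G.inf' hG fun a => a i) c)
    (hmc : m ≤ c)
    (f : (Fin n → ℕ) → (Fin n → ℕ)) (hf : ∀ u, f u = if u = c then m else u) :
    Set.BijOn f (lcmLattice G) (lcmLattice (insert m (G.erase c))) ∧
      ∀ u ∈ lcmLattice G, ∀ u' ∈ lcmLattice G, (u ≤ u' ↔ f u ≤ f u') := by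
  obtain ⟨hm0, hm1, i0, hi0eq, hi0lt⟩ := hm
  set g : Fin n → ℕ := fun i => G.inf' hG fun a => a i with hgdef
  have hg : ∀ a ∈ G, ∀ i, g i ≤ a i := fun a ha i => Finset.inf'_le _ ha
  have hmnec : m ≠ c := by
    intro h; rw [h] at hi0lt; omega
  have hkeyC : ∀ w : Fin n → ℕ, m ≤ w → (∀ i, g i ≤ w i) → c ≤ w := by
    intro w hmw hgw i
    rcases lt_or_eq_of_le (hg c hcG i) with h | h
    · exact le_trans (hm1 i h) (hmw i)
    · rw [← h]; exact hgw i
  have hmemle : ∀ (A : Finset (Fin n → ℕ)) (a : Fin n → ℕ), a ∈ A →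
      a ≤ fun i => A.sup fun x => x i := by
    intro A a ha i
    exact Finset.le_sup (f := fun x => x i) ha
  have hsuple : ∀ (A : Finset (Fin n → ℕ)) (w : Fin n → ℕ), (∀ a ∈ A, a ≤ w) →
      (fun i => A.sup fun x => x i) ≤ w := by
    intro A w h i
    show (A.sup fun x => x i) ≤ w i
    exact Finset.sup_le fun a ha => h a ha i
  have hLGg : ∀ u ∈ lcmLattice G, ∀ i, g i ≤ u i := by
    rintro u ⟨A, hAG, ⟨a, ha⟩, rfl⟩ i
    exact le_trans (hg a (hAG ha) i) (hmemle A a ha i)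
  have hbelow : ∀ a ∈ G, a ≤ c → a = c := by
    intro a ha hac
    by_contra hne
    exact hanti ha hcG hne hac
  have hsupc : ∀ u ∈ lcmLattice G, u ≤ c → u = c := by
    rintro u ⟨A, hAG, ⟨a0, ha0⟩, rfl⟩ hle
    have hall : ∀ a ∈ A, a = c := fun a ha =>
      hbelow a (hAG ha) (le_trans (hmemle A a ha) hle)
    have h0 : a0 = c := hall a0 ha0
    funext i
    refine le_antisymm (hle i) ?_
    calc c i = a0 i := by rw [h0]
    _ ≤ _ := hmemle A a0 ha0 i
  have hnotlem : ∀ u ∈ lcmLattice G, ¬ u ≤ m := by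
    intro u hu hum
    have h1 := hsupc u hu (le_trans hum hmc)
    rw [h1] at hum
    exact hmnec (le_antisymm hmc hum)
  -- MapsTo
  have hmaps : Set.MapsTo f (lcmLattice G) (lcmLattice (insert m (G.erase c))) := by
    rintro u ⟨A, hAG, ⟨a0, ha0⟩, rfl⟩
    by_cases huc : (fun i => A.sup fun x => x i) = c
    · rw [hf, if_pos huc]
      exact ⟨{m}, by simp, ⟨m, by simp⟩, by funext i; simp⟩
    · rw [hf, if_neg huc]
      by_cases hcA : c ∈ A
      · have hAe : (A.erase c).Nonempty := by
          rcases Finset.eq_empty_or_nonempty (A.erase c) with h | h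
          · exfalso
            apply huc
            have hA1 : A = {c} := by
              rcases (Finset.erase_eq_empty_iff A c).mp h with h' | h'
              · exact absurd h' (Finset.nonempty_iff_ne_empty.mp ⟨a0, ha0⟩)
              · exact h'
            funext i; simp [hA1]
          · exact h
        obtain ⟨b0, hb0⟩ := hAe
        have hb0G : b0 ∈ G := hAG (Finset.mem_of_mem_erase hb0)
        refine ⟨insert m (A.erase c), ?_, ⟨m, Finset.mem_insert_self _ _⟩, ?_⟩
        · intro x hx
          rcases Finset.mem_insert.mp hx with rfl | hx'
          · exact Finset.mem_insert_self _ _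
          · exact Finset.mem_insert_of_mem
              (Finset.mem_erase.mpr ⟨(Finset.mem_erase.mp hx').1, hAG (Finset.mem_erase.mp hx').2⟩)
        · refine le_antisymm ?_ ?_
          · apply hsuple
            intro a ha
            by_cases hac : a = c
            · subst hac
              apply hkeyC
              · exact hmemle _ m (Finset.mem_insert_self _ _)
              · intro i
                refine le_trans (hg b0 hb0G i) ?_
                exact hmemle _ b0 (Finset.mem_insert_of_mem hb0) i
            · exact hmemle _ a (Finset.mem_insert_of_mem (Finset.mem_erase.mpr ⟨hac, ha⟩))
          · apply hsuple
            intro a ha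
            rcases Finset.mem_insert.mp ha with rfl | ha'
            · exact le_trans hmc (hmemle A c hcA)
            · exact hmemle A a (Finset.mem_of_mem_erase ha')
      · refine ⟨A, ?_, ⟨a0, ha0⟩, rfl⟩
        intro x hx
        exact Finset.mem_insert_of_mem
          (Finset.mem_erase.mpr ⟨fun h => hcA (h ▸ hx), hAG hx⟩)
  -- SurjOn
  have hsurj : Set.SurjOn f (lcmLattice G) (lcmLattice (insert m (G.erase c))) := by
    rintro v ⟨A, hAG, ⟨a0, ha0⟩, rfl⟩
    have hAerG : ∀ b ∈ A, b ≠ m → b ∈ G.erase c := by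
      intro b hb hbm
      rcases Finset.mem_insert.mp (hAG hb) with h | h
      · exact absurd h hbm
      · exact h
    by_cases hmA : m ∈ A
    · by_cases hAm : (A.erase m).Nonempty
      · obtain ⟨b0, hb0⟩ := hAm
        have hb0' : b0 ∈ G.erase c :=
          hAerG b0 (Finset.mem_of_mem_erase hb0) (Finset.mem_erase.mp hb0).1
        have hb0G : b0 ∈ G := Finset.mem_of_mem_erase hb0'
        have hveq : (fun i => (insert c (A.erase m)).sup fun x => x i)
            = fun i => A.sup fun x => x i := by
          refine le_antisymm ?_ ?_
          · apply hsuple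
            intro a ha
            rcases Finset.mem_insert.mp ha with rfl | ha'
            · apply hkeyC
              · exact hmemle A m hmA
              · intro i
                exact le_trans (hg b0 hb0G i) (hmemle A b0 (Finset.mem_of_mem_erase hb0) i)
            · exact hmemle A a (Finset.mem_of_mem_erase ha')
          · apply hsuple
            intro a ha
            by_cases ham : a = m
            · subst ham
              exact le_trans hmc (hmemle _ c (Finset.mem_insert_self _ _))
            · exact hmemle _ a (Finset.mem_insert_of_mem (Finset.mem_erase.mpr ⟨ham, ha⟩))
        have hvLG : (fun i => A.sup fun x => x i) ∈ lcmLattice G := by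
          refine ⟨insert c (A.erase m), ?_, ⟨c, Finset.mem_insert_self _ _⟩, hveq.symm⟩
          intro x hx
          rcases Finset.mem_insert.mp hx with rfl | hx'
          · exact hcG
          · exact Finset.mem_of_mem_erase
              (hAerG x (Finset.mem_of_mem_erase hx') (Finset.mem_erase.mp hx').1)
        have hvne : (fun i => A.sup fun x => x i) ≠ c := by
          intro h
          have : b0 ≤ c := h ▸ hmemle A b0 (Finset.mem_of_mem_erase hb0)
          exact (Finset.mem_erase.mp hb0').1 (hbelow b0 hb0G this)
        exact ⟨_, hvLG, by rw [hf, if_neg hvne]⟩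
      · have hA1 : A = {m} := by
          rcases (Finset.erase_eq_empty_iff A m).mp (Finset.not_nonempty_iff_eq_empty.mp hAm)
            with h | h
          · exact absurd h (Finset.nonempty_iff_ne_empty.mp ⟨a0, ha0⟩)
          · exact h
        refine ⟨c, ⟨{c}, by simp [hcG], ⟨c, by simp⟩, by funext i; simp⟩, ?_⟩
        rw [hf, if_pos rfl]
        funext i; simp [hA1]
    · have hAG' : A ⊆ G := fun x hx =>
        Finset.mem_of_mem_erase (hAerG x hx (fun h => hmA (h ▸ hx)))
      have hvne : (fun i => A.sup fun x => x i) ≠ c := by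
        intro h
        have ha0c : a0 ≤ c := h ▸ hmemle A a0 ha0
        exact (Finset.mem_erase.mp (hAerG a0 ha0 (fun h' => hmA (h' ▸ ha0)))).1
          (hbelow a0 (hAG' ha0) ha0c)
      exact ⟨_, ⟨A, hAG', ⟨a0, ha0⟩, rfl⟩, by rw [hf, if_neg hvne]⟩
  -- InjOn
  have hinj : Set.InjOn f (lcmLattice G) := by
    intro u hu u' hu' he
    rw [hf, hf] at he
    by_cases h1 : u = c <;> by_cases h2 : u' = c
    · rw [h1, h2]
    · rw [if_pos h1, if_neg h2] at he
      exact absurd (le_of_eq he.symm) (hnotlem u' hu')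
    · rw [if_neg h1, if_pos h2] at he
      exact absurd (le_of_eq he) (hnotlem u hu)
    · rwa [if_neg h1, if_neg h2] at he
  refine ⟨⟨hmaps, hinj, hsurj⟩, ?_⟩
  intro u hu u' hu'
  rw [hf, hf]
  by_cases h1 : u = c <;> by_cases h2 : u' = c
  · subst h1; subst h2; simp
  · rw [if_pos h1, if_neg h2]
    subst h1
    constructor
    · intro h; exact le_trans hmc h
    · intro h; exact hkeyC u' h (hLGg u' hu')
  · rw [if_neg h1, if_pos h2]
    subst h2
    constructor
    · intro h; exact absurd (hsupc u hu h) h1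
    · intro h; exact absurd h (hnotlem u hu)
  · rw [if_neg h1, if_neg h2]
end

section
/- Let G ⊆ ℕ^n be a finite nonempty antichain for the pointwise order (the minimal generating set of a monomial ideal I), let c ∈ G, and let m ∈ C_{inf G}(c) with m ≤ c. Let Δ be a simplicial complex on a finite vertex set V, let ℓ : V → ℕ^n be a bijection from V onto G, let x₀ be the vertex with ℓ(x₀) = c, and let ℓ' : V → ℕ^n agree with ℓ everywhere except ℓ'(x₀) = m. Then for every u ∈ L_G with u ≠ c, one has Δ^ℓ_{≤u} = Δ^{ℓ'}_{≤u} and Δ^ℓ_{<u} = Δ^{ℓ'}_{<u}. -/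
/-- The label (lcm of vertex labels) of a face `σ` under the labeling `ℓ`. -/
def faceLcm {V : Type*} {n : ℕ} (ℓ : V → Fin n → ℕ) (σ : Finset V) : Fin n → ℕ :=
  fun i => σ.sup fun x => ℓ x i

lemma faceLcm_le_iff {V : Type*} {n : ℕ} (ℓ : V → Fin n → ℕ) (σ : Finset V)
    (u : Fin n → ℕ) : faceLcm ℓ σ ≤ u ↔ ∀ x ∈ σ, ℓ x ≤ u := by
  constructor
  · intro h x hx i
    exact le_trans (Finset.le_sup (f := fun x => ℓ x i) hx) (h i)
  · intro h i
    exact Finset.sup_le fun x hx => h x hx i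

lemma le_faceLcm {V : Type*} {n : ℕ} (ℓ : V → Fin n → ℕ) {σ : Finset V}
    {x : V} (hx : x ∈ σ) : ℓ x ≤ faceLcm ℓ σ :=
  fun i => Finset.le_sup (f := fun x => ℓ x i) hx

theorem stmt13 {n : ℕ} {V : Type*} [Fintype V] [DecidableEq V]
    (Δ : Set (Finset V)) (hΔ : ∀ σ ∈ Δ, ∀ τ ⊆ σ, τ ∈ Δ)
    (G : Finset (Fin n → ℕ)) (hG : G.Nonempty)
    (hanti : IsAntichain (· ≤ ·) (G : Set (Fin n → ℕ)))
    (c : Fin n → ℕ) (hcG : c ∈ G)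
    (m : Fin n → ℕ) (hm : m ∈ Cset (fun i => G.inf' hG fun a => a i) c)
    (hmc : m ≤ c)
    (ℓ ℓ' : V → Fin n → ℕ)
    (hinj : Function.Injective ℓ) (hran : Set.range ℓ = (G : Set (Fin n → ℕ)))
    (x₀ : V) (hx₀ : ℓ x₀ = c)
    (hℓ'x₀ : ℓ' x₀ = m) (hℓ' : ∀ x, x ≠ x₀ → ℓ' x = ℓ x) :
    ∀ u ∈ lcmLattice G, u ≠ c →
      ({σ | σ ∈ Δ ∧ faceLcm ℓ σ ≤ u} = {σ | σ ∈ Δ ∧ faceLcm ℓ' σ ≤ u}) ∧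
      ({σ | σ ∈ Δ ∧ faceLcm ℓ σ ≤ u ∧ faceLcm ℓ σ ≠ u} =
        {σ | σ ∈ Δ ∧ faceLcm ℓ' σ ≤ u ∧ faceLcm ℓ' σ ≠ u}) := by

  intro u hu hune
  obtain ⟨hm0, hm1, _⟩ := hm
  obtain ⟨A, hAG, hAne, hueq⟩ := hu
  set g : Fin n → ℕ := fun i => G.inf' hG fun a => a i with hgdef
  have hgle : ∀ a ∈ G, ∀ i, g i ≤ a i := fun a ha i => Finset.inf'_le _ ha
  have hmceq : ∀ i, g i < c i → m i = c i := fun i h => le_antisymm (hmc i) (hm1 i h)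
  have hcu : m ≤ u → c ≤ u := by
    intro hmu i
    by_cases h : g i < c i
    · rw [← hmceq i h]; exact hmu i
    · obtain ⟨a, haA⟩ := hAne
      have h1 : c i ≤ g i := not_lt.mp h
      have h2 : g i ≤ a i := hgle a (hAG haA) i
      have h3 : a i ≤ u i := by
        rw [hueq]; exact Finset.le_sup (f := fun a => a i) haA
      exact h1.trans (h2.trans h3)
  have hℓ'le : ∀ x, ℓ' x ≤ ℓ x := by
    intro x
    by_cases h : x = x₀
    · subst h; rw [hℓ'x₀, hx₀]; exact hmc
    · rw [hℓ' x h]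
  have hface_le : ∀ σ : Finset V, faceLcm ℓ' σ ≤ faceLcm ℓ σ := by
    intro σ
    rw [faceLcm_le_iff]
    exact fun x hx => (hℓ'le x).trans (le_faceLcm ℓ hx)
  have hequiv : ∀ σ : Finset V, faceLcm ℓ σ ≤ u ↔ faceLcm ℓ' σ ≤ u := by
    intro σ
    constructor
    · exact fun h => (hface_le σ).trans h
    · intro h
      rw [faceLcm_le_iff]
      intro x hx
      by_cases hxx : x = x₀
      · subst hxx
        rw [hx₀]
        apply hcu
        calc m = ℓ' x := (hℓ'x₀).symm ▸ rfl
          _ ≤ faceLcm ℓ' σ := le_faceLcm ℓ' hx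
          _ ≤ u := h
      · rw [← hℓ' x hxx]
        exact ((faceLcm_le_iff ℓ' σ u).mp h) x hx
  have hcongr : ∀ σ : Finset V, x₀ ∉ σ → faceLcm ℓ σ = faceLcm ℓ' σ := by
    intro σ hx₀σ
    funext i
    exact (Finset.sup_congr rfl fun x hx => by
      rw [hℓ' x (fun hh => hx₀σ (hh ▸ hx))]).symm
  have hne : ∀ σ : Finset V, faceLcm ℓ σ ≤ u → (faceLcm ℓ σ = u ↔ faceLcm ℓ' σ = u) := by
    intro σ hle
    by_cases hx₀σ : x₀ ∈ σ
    · constructor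
      · intro h
        refine le_antisymm ((hface_le σ).trans hle) ?_
        rw [← h]
        rw [faceLcm_le_iff]
        -- find y ∈ σ, y ≠ x₀
        have hy : ∃ y ∈ σ, y ≠ x₀ := by
          by_contra hcon
          push_neg at hcon
          have hσ : σ = {x₀} := by
            apply Finset.eq_singleton_iff_unique_mem.mpr
            exact ⟨hx₀σ, hcon⟩
          apply hune
          rw [← h, hσ]
          funext i
          simp [faceLcm, hx₀]
        obtain ⟨y, hyσ, hyx₀⟩ := hy
        have hℓyG : ℓ y ∈ G := by
          have : ℓ y ∈ Set.range ℓ := ⟨y, rfl⟩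
          rwa [hran] at this
        intro x hx i
        by_cases hxx : x = x₀
        · rw [hxx, hx₀]
          by_cases hgc : g i < c i
          · calc c i = m i := (hmceq i hgc).symm
              _ = ℓ' x₀ i := by rw [hℓ'x₀]
              _ ≤ faceLcm ℓ' σ i := le_faceLcm ℓ' hx₀σ i
          · have h1 : c i ≤ g i := not_lt.mp hgc
            calc c i ≤ g i := h1
              _ ≤ ℓ y i := hgle _ hℓyG i
              _ = ℓ' y i := by rw [hℓ' y hyx₀]
              _ ≤ faceLcm ℓ' σ i := le_faceLcm ℓ' hyσ i
        · rw [← hℓ' x hxx]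
          exact le_faceLcm ℓ' hx i
      · intro h
        exact le_antisymm hle (h ▸ hface_le σ)
    · rw [hcongr σ hx₀σ]
  refine ⟨?_, ?_⟩
  · ext σ
    simp only [Set.mem_setOf_eq]
    exact and_congr_right fun _ => hequiv σ
  · ext σ
    simp only [Set.mem_setOf_eq]
    constructor
    · rintro ⟨hσ, h1, h2⟩
      exact ⟨hσ, (hequiv σ).mp h1, fun h => h2 ((hne σ h1).mpr h)⟩
    · rintro ⟨hσ, h1, h2⟩
      have h1' := (hequiv σ).mpr h1
      exact ⟨hσ, h1', fun h => h2 ((hne σ h1').mp h)⟩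
end

section
/- Let G ⊆ ℕ^n be a finite nonempty antichain for the pointwise order (the minimal generating set of a monomial ideal I), let c ∈ G, and let m ∈ ℕ^n. Then m ∈ C_{inf G}(c) if and only if P(m) ∈ C_{inf_{a ∈ G} P(a)}(P(c)), where P denotes polarization and the infimum is taken pointwise over the polarizations of the elements of G (this infimum equals the polarization of gcd(I)). -/
/-- Polarization of an exponent vector: `P a (i, j) = 1` if `j < a i`, else `0`. -/
def polar {n : ℕ} (a : Fin n → ℕ) : Fin n × ℕ → ℕ :=
  fun p => if p.2 < a p.1 then 1 else 0

theorem stmt14 {n : ℕ} (G : Finset (Fin n → ℕ)) (hG : G.Nonempty)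
    (hanti : IsAntichain (· ≤ ·) (G : Set (Fin n → ℕ)))
    (c : Fin n → ℕ) (hcG : c ∈ G) (m : Fin n → ℕ) :
    m ∈ Cset (fun i => G.inf' hG fun a => a i) c ↔
      polar m ∈ Cset (fun p => G.inf' hG fun a => polar a p) (polar c) := by
  have hginf : (fun p => G.inf' hG fun a => polar a p)
      = polar (fun i => G.inf' hG fun a => a i) := by
    funext p
    rcases lt_or_ge p.2 (G.inf' hG fun a => a p.1) with h | h
    · have hall : ∀ a ∈ G, polar a p = 1 := fun a ha =>
        if_pos (lt_of_lt_of_le h (Finset.inf'_le (fun a => a p.1) ha))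
      have h1 : (G.inf' hG fun a => polar a p) = 1 := by
        apply le_antisymm
        · exact (Finset.inf'_le _ hcG).trans (le_of_eq (hall c hcG))
        · exact Finset.le_inf' _ _ fun a ha => (hall a ha).ge
      rw [h1]
      simp only [polar, if_pos h]
    · obtain ⟨a, ha, hap⟩ := (Finset.inf'_le_iff hG).mp h
      have h0 : (G.inf' hG fun a => polar a p) = 0 := by
        refine Nat.le_zero.mp ((Finset.inf'_le _ ha).trans ?_)
        simp [polar, Nat.not_lt.2 hap]
      rw [h0]
      simp only [polar, if_neg (Nat.not_lt.2 h)]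
  rw [hginf]
  set g : Fin n → ℕ := fun i => G.inf' hG fun a => a i with hg
  have hgc : ∀ i, g i ≤ c i := fun i => Finset.inf'_le _ hcG
  constructor
  · rintro ⟨h0, h1, i, hci, hmi⟩
    refine ⟨?_, ?_, ⟨i, m i⟩, ?_, ?_⟩
    · intro hpm
      apply h0
      funext k
      have := congrFun hpm (k, 0)
      simp only [polar] at this
      by_contra hk
      rw [if_pos (Nat.pos_of_ne_zero hk)] at this
      exact one_ne_zero this
    · rintro ⟨k, j⟩ h
      simp only [polar] at h ⊢
      split_ifs at h with ha hb hb <;> try omega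
      have hjm : j < m k :=
        lt_of_lt_of_le hb (h1 k (lt_of_le_of_lt (not_lt.1 ha) hb))
      rw [if_pos hb, if_pos hjm]
    · simp only [polar, hci]
    · simp only [polar]
      rw [if_neg (lt_irrefl (m i)), if_pos hmi]
      omega
  · rintro ⟨h0, h1, ⟨k, j⟩, hcg, hmk⟩
    have hsec : ∀ i, g i < c i → c i ≤ m i := by
      intro i hi
      have h2 := h1 (i, c i - 1) (by simp only [polar]; split_ifs <;> omega)
      simp only [polar] at h2
      split_ifs at h2 <;> omega
    have hjc : j < c k := by
      simp only [polar] at hmk; split_ifs at hmk <;> omega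
    have hjm : m k ≤ j := by
      simp only [polar] at hmk; split_ifs at hmk <;> omega
    have hjg : j < g k := by
      simp only [polar] at hcg; split_ifs at hcg <;> omega
    have hck : c k = g k := by
      by_contra h
      have hlt : g k < c k := lt_of_le_of_ne (hgc k) fun e => h e.symm
      have := hsec k hlt
      omega
    refine ⟨?_, hsec, k, hck, by omega⟩
    intro hm
    apply h0
    funext p
    simp [polar, hm]
end

section
/- Let n ≥ 1, let 𝒢 be a finite set of subsets of Fin n (the supports of the minimal generators of a squarefree monomial ideal I), and let N ∈ 𝒢. Let V be a nonempty set with V ⊆ B for every B ∈ 𝒢, let W be a set with W ∩ V = ∅, and set M = (N ∖ V) ∪ W (the support of the expansion monomial m ∈ C_I(n)). Then the Stanley–Reisner complex of I equals the union of the Stanley–Reisner complex of I + (m) with the complex generated by the sets Fin n ∖ {x} for x ∈ V; explicitly: { A ⊆ Fin n : ∀ B ∈ 𝒢, ¬(B ⊆ A) } = { A ⊆ Fin n : (∀ B ∈ 𝒢, ¬(B ⊆ A)) and ¬(M ⊆ A) } ∪ { A ⊆ Fin n : ¬(V ⊆ A) }. -/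
theorem stmt15 {n : ℕ} (hn : 1 ≤ n)
    (𝒢 : Finset (Finset (Fin n))) (N : Finset (Fin n)) (hN : N ∈ 𝒢)
    (V W M : Finset (Fin n))
    (hV : V.Nonempty) (hVsub : ∀ B ∈ 𝒢, V ⊆ B) (hVW : V ∩ W = ∅)
    (hM : M = (N \ V) ∪ W) :
    {A : Finset (Fin n) | ∀ B ∈ 𝒢, ¬ B ⊆ A} =
      {A : Finset (Fin n) | (∀ B ∈ 𝒢, ¬ B ⊆ A) ∧ ¬ M ⊆ A} ∪
        {A : Finset (Fin n) | ¬ V ⊆ A} := by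
  ext A
  simp only [Set.mem_setOf_eq, Set.mem_union]
  constructor
  · intro h
    by_cases hVA : V ⊆ A
    · left
      refine ⟨h, fun hMA => h N hN ?_⟩
      intro x hx
      by_cases hxV : x ∈ V
      · exact hVA hxV
      · exact hMA (hM ▸ Finset.mem_union_left _ (Finset.mem_sdiff.mpr ⟨hx, hxV⟩))
    · right; exact hVA
  · rintro (⟨h, _⟩ | h)
    · exact h
    · intro B hB hBA
      exact h ((hVsub B hB).trans hBA)
end

section
/- Let G ⊆ ℕ^n be a finite nonempty antichain for the pointwise order with 0 ∉ G (the minimal generating set of a monomial ideal I, all generators nontrivial), and let v ∈ ℕ^n with v ≠ 0. Then there exists c ∈ G such that C_{v + inf G}(v + c) ≠ ∅, i.e., the ideal v·I has a minimal generator v·c with C_{v·I}(v·c) nonempty. Indeed, any c ∈ G satisfying c_i = (inf G)_i for some index i ∈ Supp(v) has this property. -/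
theorem stmt16 {n : ℕ} (G : Finset (Fin n → ℕ)) (hG : G.Nonempty)
    (hanti : IsAntichain (· ≤ ·) (G : Set (Fin n → ℕ)))
    (h0 : (0 : Fin n → ℕ) ∉ G)
    (v : Fin n → ℕ) (hv : v ≠ 0) :
    (∃ c ∈ G,
      (Cset (v + fun i => G.inf' hG fun a => a i) (v + c)).Nonempty) ∧
    ∀ c ∈ G, (∃ i, v i ≠ 0 ∧ c i = G.inf' hG fun a => a i) →
      (Cset (v + fun i => G.inf' hG fun a => a i) (v + c)).Nonempty := by
  have key : ∀ c ∈ G, (∃ i, v i ≠ 0 ∧ c i = G.inf' hG fun a => a i) →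
      (Cset (v + fun i => G.inf' hG fun a => a i) (v + c)).Nonempty := by
    rintro c hc ⟨i, hvi, hci⟩
    have hvi1 : 1 ≤ v i := Nat.one_le_iff_ne_zero.mpr hvi
    refine ⟨Function.update (v + c) i (v i + c i - 1), ?_⟩
    simp only [Cset, Set.mem_setOf_eq]
    refine ⟨?_, ?_, i, ?_, ?_⟩
    · -- d ≠ 0
      intro hd0
      have hcne : c ≠ 0 := fun h => h0 (h ▸ hc)
      obtain ⟨j, hj⟩ : ∃ j, c j ≠ 0 := by
        by_contra h
        push_neg at h
        exact hcne (funext fun j => h j)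
      by_cases hji : j = i
      · subst hji
        have h1 : Function.update (v + c) j (v j + c j - 1) j = 0 := congrFun hd0 j
        rw [Function.update_self] at h1
        clear hci; omega
      · have h1 : Function.update (v + c) i (v i + c i - 1) j = 0 := congrFun hd0 j
        rw [Function.update_of_ne hji] at h1
        have h2 : v j + c j = 0 := h1
        clear hci; omega
    · intro j hj
      simp only [Pi.add_apply] at hj
      have hji : j ≠ i := by
        intro h; subst h; simp [hci] at hj
      rw [Function.update_of_ne hji]
    · show v i + c i = v i + G.inf' hG fun a => a i
      rw [hci]
    · rw [Function.update_self]
      show v i + c i - 1 < v i + c i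
      clear hci; omega
  refine ⟨?_, key⟩
  obtain ⟨i, hvi⟩ : ∃ i, v i ≠ 0 := by
    by_contra h
    push_neg at h
    exact hv (funext fun j => h j)
  obtain ⟨c, hc, hci⟩ := G.exists_mem_eq_inf' hG fun a => a i
  exact ⟨c, hc, key c hc ⟨i, hvi, hci.symm⟩⟩
end

section
/- Let G ⊆ ℕ^n be a finite nonempty antichain for the pointwise order with 0 ∉ G (the minimal generating set of a monomial ideal I), and let v ∈ ℕ^n with v ≠ 0 satisfy min(v, a) = 0 pointwise for every a ∈ G (i.e., gcd(v, m_i) = 1 for every minimal generator m_i of I). Then for every a ∈ G, one has a ∈ C_{v + inf G}(v + a), i.e., each original generator a lies in C_{v·I}(v·a). -/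
theorem stmt17 {n : ℕ} (G : Finset (Fin n → ℕ)) (hG : G.Nonempty)
    (hanti : IsAntichain (· ≤ ·) (G : Set (Fin n → ℕ)))
    (h0 : (0 : Fin n → ℕ) ∉ G)
    (v : Fin n → ℕ) (hv : v ≠ 0)
    (hcop : ∀ a ∈ G, ∀ i, min (v i) (a i) = 0) :
    ∀ a ∈ G, a ∈ Cset (v + fun i => G.inf' hG fun b => b i) (v + a) := by
  intro a ha
  refine ⟨fun h => h0 (h ▸ ha), ?_, ?_⟩
  · intro i hi
    have hi' : v i + (G.inf' hG fun b => b i) < v i + a i := hi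
    have hgoal : v i + a i ≤ a i → (v + a) i ≤ a i := fun h => h
    apply hgoal
    have hai : 0 < a i := lt_of_le_of_lt (Nat.zero_le _) (lt_of_add_lt_add_left hi')
    have := hcop a ha i
    clear hi hcop h0 hanti
    generalize G.inf' hG (fun b => b i) = m at hi'
    omega
  · obtain ⟨i, hvi⟩ : ∃ i, v i ≠ 0 := by
      by_contra h; push_neg at h; exact hv (funext h)
    have hai : a i = 0 := by have := hcop a ha i; omega
    refine ⟨i, ?_, ?_⟩
    · have h1 : G.inf' hG (fun b => b i) = 0 := by
        refine le_antisymm ?_ (Nat.zero_le _)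
        exact hai ▸ Finset.inf'_le _ ha
      show v i + a i = v i + G.inf' hG fun b => b i
      generalize G.inf' hG (fun b => b i) = m at h1 ⊢
      omega
    · show a i < v i + a i
      omega
end
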